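/- Let μ, ν be probability measures on Cantor space with full support, and suppose A : 2^{<ℕ} → ℝ≥0 is increasing with A(∅) = 0 and A(σ0) = A(σ1) for all σ, and suppose the increments satisfy A(σι) − A(σ) < 2(1 − sqrt(1/2)) for all σ, ι. Then there exists a full-support probability measure μ on Cantor space such that for all strings σ and bits ι: A(σι) − A(σ) = 2(1 − Σ_{j∈{0,1}} sqrt(μ(σj|σ)·ν(σj|σ))). Consequently, for every ω, sup_n A(ω↾n) = Σ_n H²_{F_{n+1}}(μ,ν)(ω), where H²_{F_{n+1}}(μ,ν)(ω) = 2(1 − Σ_{j} sqrt(μ([ω↾n·j]|[ω↾n])·ν([ω↾n·j]|[ω↾n]))) is the squared Hellinger distance of the one-step conditional measures. -/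

import Mathlib

open MeasureTheory Filter Topology

/-- Cantor space `2^ℕ`. -/
abbrev Cantor : Type := ℕ → Bool

/-- The basic clopen cylinder determined by a finite binary string. -/
def cyl (σ : List Bool) : Set Cantor := {ω | ∀ i : Fin σ.length, ω i = σ.get i}

/-- The first `n` bits of `ω`, as a finite binary string. -/
def pre (ω : Cantor) (n : ℕ) : List Bool := (List.range n).map ω

/-- A measure on Cantor space has full support if every cylinder has positive measure. -/
def FullSupport (ν : Measure Cantor) : Prop := ∀ σ : List Bool, 0 < ν (cyl σ)

/-- Conditional probability `ν([τ] | [σ]) = ν([τ])/ν([σ])` (intended for `τ` extending `σ`). -/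
noncomputable def cp (ν : Measure Cantor) (τ σ : List Bool) : ℝ :=
  (ν (cyl τ)).toReal / (ν (cyl σ)).toReal

/-- The conditional measure `ν(· | [σ]) = ν(· ∩ [σ]) / ν([σ])`. -/
noncomputable def condMeas (ν : Measure Cantor) (σ : List Bool) : Measure Cantor :=
  (ν (cyl σ))⁻¹ • ν.restrict (cyl σ)

/-- The σ-algebra generated by the length-`k` cylinders. -/
def Falg (k : ℕ) : MeasurableSpace Cantor :=
  MeasurableSpace.generateFrom {A | ∃ σ : List Bool, σ.length = k ∧ A = cyl σ}

/-- Total variational distance between two measures restricted to a σ-algebra `G`. -/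
noncomputable def tv (G : MeasurableSpace Cantor) (ρ τ : @Measure Cantor MeasurableSpace.pi) : ℝ :=
  ⨆ A : {A : Set Cantor // MeasurableSet[G] A}, |(ρ A.1).toReal - (τ A.1).toReal|

/-- A dyadic `ν`-martingale: `M(σ) = M(σ0)ν(σ0|σ) + M(σ1)ν(σ1|σ)`. -/
def IsDyMart (ν : Measure Cantor) (M : List Bool → ℝ) : Prop :=
  ∀ σ : List Bool,
    M σ = M (σ ++ [false]) * cp ν (σ ++ [false]) σ + M (σ ++ [true]) * cp ν (σ ++ [true]) σ

/-- A dyadic `ν`-submartingale: `L(σ) ≤ L(σ0)ν(σ0|σ) + L(σ1)ν(σ1|σ)`. -/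
def IsDySubmart (ν : Measure Cantor) (L : List Bool → ℝ) : Prop :=
  ∀ σ : List Bool,
    L σ ≤ L (σ ++ [false]) * cp ν (σ ++ [false]) σ + L (σ ++ [true]) * cp ν (σ ++ [true]) σ

/-- A dyadic function is increasing if it is monotone along prefixes. -/
def IncrDy (A : List Bool → ℝ) : Prop := ∀ σ τ : List Bool, σ <+: τ → A σ ≤ A τ

/-! At each node `σ`, with `q = ν(σ0|σ)`, the function `x ↦ √(x q) + √((1 - x)(1 - q))` equals `1`
at `x = q` and is at most `√(1/2)` at `x = 0` or at `x = 1`, so by the intermediate value theorem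
it takes the value `1 - (A(σ0) - A(σ))/2` at some `x_σ ∈ (0, 1)`. A full-support measure `μ` with
`μ(σ0|σ) = x_σ` is the law of the digits of a uniform point of `[0, 1)` in the subdivision that
cuts the interval of `σ` at proportion `x_σ`. Summing the increments of `A` along `ω` telescopes. -/

open Set

lemma length_pre (ω : Cantor) (n : ℕ) : (pre ω n).length = n := by simp [pre]

lemma pre_succ (ω : Cantor) (n : ℕ) : pre ω (n + 1) = pre ω n ++ [ω n] := by
  simp [pre, List.range_succ]

lemma mem_cyl_iff_pre_eq {ω : Cantor} {σ : List Bool} : ω ∈ cyl σ ↔ pre ω σ.length = σ := by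
  refine ⟨fun h => List.ext_get (length_pre ω _) fun i _ hi => ?_, fun h i => ?_⟩
  · simpa [pre] using h ⟨i, hi⟩
  · simp [List.getElem_of_eq h.symm, pre]

lemma mem_cyl_append_singleton {ω : Cantor} {σ : List Bool} {b : Bool} :
    ω ∈ cyl (σ ++ [b]) ↔ ω ∈ cyl σ ∧ ω σ.length = b := by
  simp [mem_cyl_iff_pre_eq, pre_succ]

lemma measurableSet_cyl (σ : List Bool) : MeasurableSet (cyl σ) := by
  have : cyl σ = ⋂ i : Fin σ.length, (fun ω : Cantor => ω i) ⁻¹' {σ.get i} := by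
    ext ω; simp [cyl]
  rw [this]
  exact .iInter fun i => measurable_pi_apply _ (measurableSet_singleton _)

lemma measure_cyl_append_false_add_true (ρ : Measure Cantor) (σ : List Bool) :
    ρ (cyl (σ ++ [false])) + ρ (cyl (σ ++ [true])) = ρ (cyl σ) := by
  have hsplit : cyl (σ ++ [false]) ∪ cyl (σ ++ [true]) = cyl σ := by
    ext ω
    cases h : ω σ.length <;> simp [mem_cyl_append_singleton, h]
  have hdisj : Disjoint (cyl (σ ++ [false])) (cyl (σ ++ [true])) :=
    Set.disjoint_left.2 fun ω h₁ h₂ => by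
      simp only [mem_cyl_append_singleton] at h₁ h₂; simp [h₁.2] at h₂
  rw [← measure_union hdisj (measurableSet_cyl _), hsplit]

lemma cp_append_true_eq_one_sub (ρ : Measure Cantor) [IsFiniteMeasure ρ] {σ : List Bool}
    (hσ : ρ (cyl σ) ≠ 0) : cp ρ (σ ++ [true]) σ = 1 - cp ρ (σ ++ [false]) σ := by
  have hsum := congrArg ENNReal.toReal (measure_cyl_append_false_add_true ρ σ)
  rw [ENNReal.toReal_add (measure_ne_top _ _) (measure_ne_top _ _)] at hsum
  have hpos : (ρ (cyl σ)).toReal ≠ 0 := ENNReal.toReal_ne_zero.2 ⟨hσ, measure_ne_top _ _⟩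
  rw [cp, cp, eq_sub_iff_add_eq, ← add_div, add_comm, hsum, div_self hpos]

lemma cp_append_false_mem_Ioo (ρ : Measure Cantor) [IsFiniteMeasure ρ] (hρ : FullSupport ρ)
    (σ : List Bool) : cp ρ (σ ++ [false]) σ ∈ Ioo 0 1 := by
  have hpos : ∀ τ, 0 < (ρ (cyl τ)).toReal := fun τ =>
    ENNReal.toReal_pos (hρ τ).ne' (measure_ne_top _ _)
  have htrue : 0 < cp ρ (σ ++ [true]) σ := div_pos (hpos _) (hpos _)
  rw [cp_append_true_eq_one_sub ρ (hρ σ).ne'] at htrue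
  exact ⟨div_pos (hpos _) (hpos _), by linarith⟩

lemma ENNReal.iSup_ofReal_eq_tsum_ofReal_sub {a : ℕ → ℝ} (ha : Monotone a) (h₀ : a 0 = 0) :
    ⨆ n, ENNReal.ofReal (a n) = ∑' n, ENNReal.ofReal (a (n + 1) - a n) := by
  rw [ENNReal.tsum_eq_iSup_nat]
  congr 1 with n
  rw [← ENNReal.ofReal_sum_of_nonneg fun i _ => sub_nonneg.2 (ha i.le_succ),
    Finset.sum_range_sub, h₀, sub_zero]

lemma exists_sqrt_mul_add_sqrt_mul_eq {p c : ℝ} (hp : p ∈ Ioo 0 1) (hc : √(1 / 2) < c)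
    (hc₁ : c ≤ 1) : ∃ x ∈ Ioo 0 1, √(x * p) + √((1 - x) * (1 - p)) = c := by
  set g : ℝ → ℝ := fun x => √(x * p) + √((1 - x) * (1 - p))
  have hg : Continuous g := by fun_prop
  have hgp : g p = 1 := by
    simp only [g]
    rw [Real.sqrt_mul_self hp.1.le, Real.sqrt_mul_self (by linarith [hp.2])]
    ring
  -- `g p = 1`, while `min (g 0) (g 1) = min √(1 - p) √p ≤ √(1/2) < c`
  have ivt : ∀ e : ℝ, (e = 0 ∨ e = 1) → g e < c → ∃ x ∈ Ioo 0 1, g x = c := by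
    intro e he hge
    obtain ⟨x, hx, hgx⟩ := intermediate_value_uIcc hg.continuousOn
      (show c ∈ uIcc (g e) (g p) by rw [hgp]; exact ⟨by simp [hge.le], by simp [hc₁]⟩)
    have hxe : x ≠ e := by rintro rfl; exact hge.ne hgx
    refine ⟨x, ?_, hgx⟩
    rcases he with rfl | rfl
    · rw [uIcc_of_le hp.1.le] at hx
      exact ⟨lt_of_le_of_ne hx.1 hxe.symm, by linarith [hx.2, hp.2]⟩
    · rw [uIcc_of_ge hp.2.le] at hx
      exact ⟨by linarith [hx.1, hp.1], lt_of_le_of_ne hx.2 hxe⟩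
  rcases le_total p (1 / 2) with hp₂ | hp₂
  · refine ivt 1 (.inr rfl) ?_
    simpa [g] using (Real.sqrt_le_sqrt hp₂).trans_lt hc
  · refine ivt 0 (.inl rfl) ?_
    simpa [g] using (Real.sqrt_le_sqrt (by linarith : 1 - p ≤ 1 / 2)).trans_lt hc

namespace Subdivision

variable (p : List Bool → ℝ)

/-- Strings grow at their right end, so the interval `[lo σ, hi σ)` of `σ` is computed by
recursion on the reversed string: the interval of `σ` is cut at proportion `p σ`, its left part
going to `σ ++ [false]`. -/
noncomputable def endpointsRev : List Bool → ℝ × ℝ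
  | [] => (0, 1)
  | b :: τ =>
    let I := endpointsRev τ
    let m := I.1 + p τ.reverse * (I.2 - I.1)
    if b then (m, I.2) else (I.1, m)

noncomputable def lo (σ : List Bool) : ℝ := (endpointsRev p σ.reverse).1

noncomputable def hi (σ : List Bool) : ℝ := (endpointsRev p σ.reverse).2

noncomputable def mid (σ : List Bool) : ℝ := lo p σ + p σ * (hi p σ - lo p σ)

@[simp] lemma lo_nil : lo p [] = 0 := rfl

@[simp] lemma hi_nil : hi p [] = 1 := rfl

@[simp] lemma lo_append_false (σ : List Bool) : lo p (σ ++ [false]) = lo p σ := by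
  simp [lo, endpointsRev]

@[simp] lemma hi_append_false (σ : List Bool) : hi p (σ ++ [false]) = mid p σ := by
  simp [hi, mid, lo, endpointsRev]

@[simp] lemma lo_append_true (σ : List Bool) : lo p (σ ++ [true]) = mid p σ := by
  simp [hi, mid, lo, endpointsRev]

@[simp] lemma hi_append_true (σ : List Bool) : hi p (σ ++ [true]) = hi p σ := by
  simp [hi, endpointsRev]

variable {p}

lemma lo_lt_hi (hp : ∀ σ, p σ ∈ Ioo 0 1) (σ : List Bool) : lo p σ < hi p σ := by
  induction σ using List.reverseRecOn with
  | nil => simp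
  | append_singleton σ b ih =>
    have := hp σ
    cases b <;> simp only [lo_append_false, hi_append_false, lo_append_true, hi_append_true, mid,
      mem_Ioo] at this ⊢ <;> nlinarith

lemma lo_lt_mid (hp : ∀ σ, p σ ∈ Ioo 0 1) (σ : List Bool) : lo p σ < mid p σ := by
  have := lo_lt_hi hp σ; have := hp σ; simp only [mid, mem_Ioo] at *; nlinarith

lemma mid_lt_hi (hp : ∀ σ, p σ ∈ Ioo 0 1) (σ : List Bool) : mid p σ < hi p σ := by
  have := lo_lt_hi hp σ; have := hp σ; simp only [mid, mem_Ioo] at *; nlinarith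

lemma Ico_lo_hi_subset (hp : ∀ σ, p σ ∈ Ioo 0 1) (σ : List Bool) :
    Ico (lo p σ) (hi p σ) ⊆ Ico 0 1 := by
  induction σ using List.reverseRecOn with
  | nil => simp
  | append_singleton σ b ih =>
    refine Subset.trans (Ico_subset_Ico ?_ ?_) ih <;> cases b <;>
      simp [(lo_lt_mid hp σ).le, (mid_lt_hi hp σ).le]

variable (p)

noncomputable def codePrefix (t : ℝ) : ℕ → List Bool
  | 0 => []
  | n + 1 => codePrefix t n ++ [decide (mid p (codePrefix t n) ≤ t)]

noncomputable def code (t : ℝ) : Cantor := fun n => decide (mid p (codePrefix p t n) ≤ t)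

lemma pre_code (t : ℝ) (n : ℕ) : pre (code p t) n = codePrefix p t n := by
  induction n with
  | zero => rfl
  | succ n ih => rw [pre_succ, ih]; rfl

lemma measurable_decide_le (c : ℝ) : Measurable fun t : ℝ => decide (c ≤ t) :=
  measurable_to_bool <| by
    simp only [preimage, mem_singleton_iff, decide_eq_true_eq]; exact measurableSet_Ici

lemma measurableSet_codePrefix_eq (n : ℕ) (σ : List Bool) :
    MeasurableSet {t | codePrefix p t n = σ} := by
  induction n generalizing σ with
  | zero => exact .const ([] = σ)
  | succ n ih =>
    have : {t | codePrefix p t (n + 1) = σ} =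
        ⋃ τ, {t | codePrefix p t n = τ} ∩
          (fun t => decide (mid p τ ≤ t)) ⁻¹' {b | τ ++ [b] = σ} := by
      ext t; simp [codePrefix]
    rw [this]
    exact .iUnion fun τ => (ih τ).inter (measurable_decide_le _ trivial)

lemma measurable_code : Measurable (code p) := by
  refine measurable_pi_lambda _ fun n => ?_
  have : (fun t => code p t n) ⁻¹' {true} =
      ⋃ σ, {t | codePrefix p t n = σ} ∩ (fun t => decide (mid p σ ≤ t)) ⁻¹' {true} := by
    ext t; simp [code]
  exact measurable_to_bool <| this ▸
    .iUnion fun σ => (measurableSet_codePrefix_eq p n σ).inter (measurable_decide_le _ trivial)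

variable {p}

lemma codePrefix_eq_iff (hp : ∀ σ, p σ ∈ Ioo 0 1) {t : ℝ} (ht : t ∈ Ico 0 1) (σ : List Bool) :
    codePrefix p t σ.length = σ ↔ t ∈ Ico (lo p σ) (hi p σ) := by
  induction σ using List.reverseRecOn with
  | nil => simpa [codePrefix] using ht
  | append_singleton σ b ih =>
    have := lo_lt_mid hp σ
    have := mid_lt_hi hp σ
    rw [List.length_append, List.length_singleton, codePrefix, List.append_singleton_inj,
      and_congr_right fun h => by rw [h], ih]
    cases b <;> simp only [mem_Ico, lo_append_false, hi_append_false, lo_append_true,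
      hi_append_true, decide_eq_false_iff_not, decide_eq_true_eq, not_le] <;>
      grind

variable (p) in
noncomputable def measure : Measure Cantor := (volume.restrict (Ico (0 : ℝ) 1)).map (code p)

instance : IsProbabilityMeasure (measure p) :=
  ⟨by simp [measure, Measure.map_apply (measurable_code p) .univ]⟩

lemma measure_cyl (hp : ∀ σ, p σ ∈ Ioo 0 1) (σ : List Bool) :
    measure p (cyl σ) = ENNReal.ofReal (hi p σ - lo p σ) := by
  have hpre : code p ⁻¹' cyl σ ∩ Ico 0 1 = Ico (lo p σ) (hi p σ) := by
    ext t
    simp only [mem_inter_iff, mem_preimage, mem_cyl_iff_pre_eq, pre_code]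
    exact ⟨fun h => (codePrefix_eq_iff hp h.2 σ).1 h.1, fun h =>
      ⟨(codePrefix_eq_iff hp (Ico_lo_hi_subset hp σ h) σ).2 h, Ico_lo_hi_subset hp σ h⟩⟩
  rw [measure, Measure.map_apply (measurable_code p) (measurableSet_cyl σ),
    Measure.restrict_apply' measurableSet_Ico, hpre, Real.volume_Ico]

lemma fullSupport_measure (hp : ∀ σ, p σ ∈ Ioo 0 1) : FullSupport (measure p) := fun σ => by
  simpa [measure_cyl hp] using lo_lt_hi hp σ

lemma cp_measure_append_false (hp : ∀ σ, p σ ∈ Ioo 0 1) (σ : List Bool) :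
    cp (measure p) (σ ++ [false]) σ = p σ := by
  have hlen := lo_lt_hi hp σ
  rw [cp, measure_cyl hp, measure_cyl hp, lo_append_false, hi_append_false,
    ENNReal.toReal_ofReal (sub_nonneg.2 (lo_lt_mid hp σ).le),
    ENNReal.toReal_ofReal (sub_nonneg.2 hlen.le), mid, add_sub_cancel_left,
    mul_div_cancel_right₀ _ (sub_pos.2 hlen).ne']

end Subdivision

theorem exists_fullSupport_cp_append_false_eq {p : List Bool → ℝ} (hp : ∀ σ, p σ ∈ Ioo 0 1) :
    ∃ μ : Measure Cantor, IsProbabilityMeasure μ ∧ FullSupport μ ∧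
      ∀ σ, cp μ (σ ++ [false]) σ = p σ :=
  ⟨_, inferInstance, Subdivision.fullSupport_measure hp, Subdivision.cp_measure_append_false hp⟩

theorem stmt14_general (ν : Measure Cantor) [IsProbabilityMeasure ν] (hν : FullSupport ν)
    (A : List Bool → ℝ) (hA0 : A [] = 0) (hinc : IncrDy A)
    (hsame : ∀ σ : List Bool, A (σ ++ [false]) = A (σ ++ [true]))
    (hsmall : ∀ (σ : List Bool) (ι : Bool),
      A (σ ++ [ι]) - A σ < 2 * (1 - Real.sqrt (1 / 2))) :
    ∃ μ : Measure Cantor, IsProbabilityMeasure μ ∧ FullSupport μ ∧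
      (∀ (σ : List Bool) (ι : Bool),
        A (σ ++ [ι]) - A σ =
          2 * (1 - ∑ j : Bool, Real.sqrt (cp μ (σ ++ [j]) σ * cp ν (σ ++ [j]) σ))) ∧
      (∀ ω : Cantor,
        (⨆ n : ℕ, ENNReal.ofReal (A (pre ω n))) =
          ∑' n : ℕ, ENNReal.ofReal
            (2 * (1 - ∑ j : Bool,
              Real.sqrt (cp μ (pre ω n ++ [j]) (pre ω n) *
                cp ν (pre ω n ++ [j]) (pre ω n))))) := by
  have hsolve : ∀ σ, ∃ x ∈ Ioo 0 1, √(x * cp ν (σ ++ [false]) σ) +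
      √((1 - x) * (1 - cp ν (σ ++ [false]) σ)) = 1 - (A (σ ++ [false]) - A σ) / 2 := fun σ =>
    exists_sqrt_mul_add_sqrt_mul_eq (cp_append_false_mem_Ioo ν hν σ)
      (by linarith [hsmall σ false]) (by linarith [hinc σ (σ ++ [false]) (List.prefix_append _ _)])
  choose x hx hxsolves using hsolve
  obtain ⟨μ, hμ, hμfull, hμcp⟩ := exists_fullSupport_cp_append_false_eq hx
  have hincr : ∀ σ ι, A (σ ++ [ι]) - A σ =
      2 * (1 - ∑ j : Bool, √(cp μ (σ ++ [j]) σ * cp ν (σ ++ [j]) σ)) := by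
    intro σ ι
    rw [Fintype.sum_bool, cp_append_true_eq_one_sub μ (hμfull σ).ne',
      cp_append_true_eq_one_sub ν (hν σ).ne', hμcp, add_comm, hxsolves,
      show A (σ ++ [ι]) = A (σ ++ [false]) by cases ι <;> simp [hsame]]
    ring
  refine ⟨μ, hμ, hμfull, hincr, fun ω => ?_⟩
  have hmono : Monotone fun n => A (pre ω n) :=
    monotone_nat_of_le_succ fun n => hinc _ _ ⟨[ω n], (pre_succ ω n).symm⟩
  simp_rw [ENNReal.iSup_ofReal_eq_tsum_ofReal_sub hmono hA0, pre_succ, hincr]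

/-- Given an increasing non-negative dyadic function `A` with `A(∅)=0`, `A(σ0)=A(σ1)`, and
increments below `2(1−√(1/2))`, there is a full-support probability measure `μ` whose one-step
squared Hellinger distances to `ν` realize the increments of `A`; consequently
`sup_n A(ω↾n) = Σ_n H²_{F_{n+1}}(μ,ν)(ω)` for every `ω`. -/
theorem stmt14 (ν : Measure Cantor) [IsProbabilityMeasure ν] (hν : FullSupport ν)
    (A : List Bool → ℝ) (hA0 : A [] = 0) (hnn : ∀ σ, 0 ≤ A σ) (hinc : IncrDy A)
    (hsame : ∀ σ : List Bool, A (σ ++ [false]) = A (σ ++ [true]))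
    (hsmall : ∀ (σ : List Bool) (ι : Bool),
      A (σ ++ [ι]) - A σ < 2 * (1 - Real.sqrt (1 / 2))) :
    ∃ μ : Measure Cantor, IsProbabilityMeasure μ ∧ FullSupport μ ∧
      (∀ (σ : List Bool) (ι : Bool),
        A (σ ++ [ι]) - A σ =
          2 * (1 - ∑ j : Bool, Real.sqrt (cp μ (σ ++ [j]) σ * cp ν (σ ++ [j]) σ))) ∧
      (∀ ω : Cantor,
        (⨆ n : ℕ, ENNReal.ofReal (A (pre ω n))) =
          ∑' n : ℕ, ENNReal.ofReal
            (2 * (1 - ∑ j : Bool,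
              Real.sqrt (cp μ (pre ω n ++ [j]) (pre ω n) *
                cp ν (pre ω n ++ [j]) (pre ω n))))) :=
  stmt14_general ν hν A hA0 hinc hsame hsmall
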